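/- arXiv:2311.10981 — 2 statements merged into one kernel-verified Lean document; each statement's English description precedes it below -/
import Mathlib

section
/- Let a ∈ (0,1], δ > 0, and p ∈ (1,∞). Define J : (1,∞) → ℝ by J(t) = t^{1−(a+δ)} if a+δ < 1, J(t) = log t if a+δ = 1, and J(t) = 1 if a+δ > 1. Then there exists a constant C > 0 such that for every τ ≥ 1, ∫_{τ+1}^{2τ} (1+t²)^{−p(1−a)/2} · J(t)^{p−1} · (t−τ)^{−(a+δ)} dt ≤ C. -/
/-!
On `[τ + 1, 2τ]` we have `τ ≤ t ≤ 2τ`, so `⟨t⟩^{-p(1-a)} J(t)^{p-1}` is bounded by a power of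
`τ`, while `∫_{τ+1}^{2τ} (t - τ)^{-θ} dt = ∫_1^τ s^{-θ} ds`. For `θ = a + δ > 1` the latter is
bounded and the weight is at most `1`. For `θ < 1` it is `O(τ^{1-θ})`, and the weight contributes
`τ^{-p(1-a)} τ^{(1-θ)(p-1)} ≤ τ^{θ-1}`. For `θ = 1` we use `log t ≤ t^δ / δ` and trade
`(t - τ)^{-1}` for `(t - τ)^{-a}`, which reduces to the case `θ = a < 1`.
-/

open MeasureTheory Real Set

/-- The function `J` of the paper, the growth of `∫_{t/2}^{t-1} (t - σ)^{-θ} dσ`. -/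
noncomputable def duhamelGrowth (θ t : ℝ) : ℝ :=
  if θ < 1 then t ^ (1 - θ) else if θ = 1 then log t else 1

section Kernel

variable {τ θ : ℝ}

lemma setIntegral_Icc_sub_rpow {L : ℝ} (hL : 1 ≤ L) (hθ : θ ≠ 1) :
    ∫ t in Icc (τ + 1) (τ + L), (t - τ) ^ (-θ) = (L ^ (1 - θ) - 1) / (1 - θ) := by
  rw [integral_Icc_eq_integral_Ioc, ← intervalIntegral.integral_of_le (by linarith),
    intervalIntegral.integral_comp_sub_right (fun s => s ^ (-θ)), add_sub_cancel_left,
    add_sub_cancel_left, integral_rpow, one_rpow, neg_add_eq_sub]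
  refine Or.inr ⟨fun h => hθ (by linarith), fun h0 => ?_⟩
  rcases mem_uIcc.mp h0 with h | h <;> linarith [h.1, h.2]

lemma setLIntegral_Icc_sub_rpow (hτ : 1 ≤ τ) (hθ : θ ≠ 1) :
    ∫⁻ t in Icc (τ + 1) (2 * τ), ENNReal.ofReal ((t - τ) ^ (-θ)) =
      ENNReal.ofReal ((τ ^ (1 - θ) - 1) / (1 - θ)) := by
  have hcont : ContinuousOn (fun t => (t - τ) ^ (-θ)) (Icc (τ + 1) (2 * τ)) :=
    ContinuousOn.rpow_const (by fun_prop) fun t ht => Or.inl (by linarith [ht.1])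
  rw [two_mul, ← setIntegral_Icc_sub_rpow hτ hθ, ofReal_integral_eq_lintegral_ofReal]
  · exact (two_mul τ ▸ hcont).integrableOn_Icc
  · filter_upwards [ae_restrict_mem measurableSet_Icc] with t ht
    exact rpow_nonneg (by linarith [ht.1]) _

lemma setLIntegral_Icc_le_of_le_mul_sub_rpow {f : ℝ → ℝ} {A : ℝ} (hτ : 1 ≤ τ) (hθ : θ ≠ 1)
    (hA : 0 ≤ A) (hf : ∀ t ∈ Icc (τ + 1) (2 * τ), f t ≤ A * (t - τ) ^ (-θ)) :
    ∫⁻ t in Icc (τ + 1) (2 * τ), ENNReal.ofReal (f t) ≤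
      ENNReal.ofReal A * ENNReal.ofReal ((τ ^ (1 - θ) - 1) / (1 - θ)) := by
  calc ∫⁻ t in Icc (τ + 1) (2 * τ), ENNReal.ofReal (f t)
      ≤ ∫⁻ t in Icc (τ + 1) (2 * τ), ENNReal.ofReal A * ENNReal.ofReal ((t - τ) ^ (-θ)) :=
        setLIntegral_mono' measurableSet_Icc fun t ht =>
          (ENNReal.ofReal_le_ofReal (hf t ht)).trans_eq (ENNReal.ofReal_mul hA)
    _ = _ := by
        rw [lintegral_const_mul' _ _ ENNReal.ofReal_ne_top, setLIntegral_Icc_sub_rpow hτ hθ]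

lemma setLIntegral_Icc_mul_sub_rpow_le_of_lt_one {g : ℝ → ℝ} {θ' c : ℝ} (hτ : 1 ≤ τ)
    (hθ' : θ' < 1) (hθ'θ : θ' ≤ θ) (hc : 0 ≤ c)
    (hg : ∀ t ∈ Icc (τ + 1) (2 * τ), g t ≤ c * τ ^ (θ' - 1)) :
    ∫⁻ t in Icc (τ + 1) (2 * τ), ENNReal.ofReal (g t * (t - τ) ^ (-θ)) ≤
      ENNReal.ofReal (c / (1 - θ')) := by
  have hA : 0 ≤ c * τ ^ (θ' - 1) := by positivity
  have hf : ∀ t ∈ Icc (τ + 1) (2 * τ),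
      g t * (t - τ) ^ (-θ) ≤ c * τ ^ (θ' - 1) * (t - τ) ^ (-θ') := fun t ht => by
    have h1 : 1 ≤ t - τ := by linarith [ht.1]
    exact mul_le_mul (hg t ht) (rpow_le_rpow_of_exponent_le h1 (by linarith))
      (by positivity) hA
  refine (setLIntegral_Icc_le_of_le_mul_sub_rpow hτ hθ'.ne hA hf).trans ?_
  rw [← ENNReal.ofReal_mul hA]
  refine ENNReal.ofReal_le_ofReal ?_
  have hτθ : τ ^ (θ' - 1) * τ ^ (1 - θ') = 1 := by
    rw [← rpow_add (by linarith)]; simp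
  calc c * τ ^ (θ' - 1) * ((τ ^ (1 - θ') - 1) / (1 - θ'))
      = c * (1 - τ ^ (θ' - 1)) / (1 - θ') := by linear_combination c / (1 - θ') * hτθ
    _ ≤ c / (1 - θ') := by
        gcongr
        linarith [rpow_nonneg (by linarith : (0 : ℝ) ≤ τ) (θ' - 1)]

lemma setLIntegral_Icc_mul_sub_rpow_le_of_one_lt {g : ℝ → ℝ} {c : ℝ} (hτ : 1 ≤ τ) (hθ : 1 < θ)
    (hc : 0 ≤ c) (hg : ∀ t ∈ Icc (τ + 1) (2 * τ), g t ≤ c) :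
    ∫⁻ t in Icc (τ + 1) (2 * τ), ENNReal.ofReal (g t * (t - τ) ^ (-θ)) ≤
      ENNReal.ofReal (c / (θ - 1)) := by
  have hf : ∀ t ∈ Icc (τ + 1) (2 * τ), g t * (t - τ) ^ (-θ) ≤ c * (t - τ) ^ (-θ) :=
    fun t ht => mul_le_mul_of_nonneg_right (hg t ht) (rpow_nonneg (by linarith [ht.1]) _)
  refine (setLIntegral_Icc_le_of_le_mul_sub_rpow hτ hθ.ne' hc hf).trans ?_
  have hbound : (τ ^ (1 - θ) - 1) / (1 - θ) ≤ 1 / (θ - 1) := by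
    rw [← neg_div_neg_eq, neg_sub, neg_sub]
    gcongr
    linarith [rpow_nonneg (by linarith : (0 : ℝ) ≤ τ) (1 - θ)]
  rw [← ENNReal.ofReal_mul hc]
  exact ENNReal.ofReal_le_ofReal ((mul_le_mul_of_nonneg_left hbound hc).trans_eq (mul_one_div _ _))

end Kernel

section Weight

variable {a p τ θ t : ℝ}

lemma one_add_sq_rpow_neg_half_le {b : ℝ} (hb : 0 ≤ b) (hτ : 0 < τ) (hτt : τ ≤ t) :
    (1 + t ^ 2) ^ (-b / 2) ≤ τ ^ (-b) := by
  calc (1 + t ^ 2) ^ (-b / 2) ≤ (τ ^ 2) ^ (-b / 2) :=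
        rpow_le_rpow_of_nonpos (by positivity) (by nlinarith) (by linarith)
    _ = τ ^ (-b) := by rw [← rpow_natCast, ← rpow_mul hτ.le]; congr 1; ring

lemma one_add_sq_rpow_neg_mul_rpow_le (hτ : 1 ≤ τ) (ht : t ∈ Icc τ (2 * τ)) (hp : 1 ≤ p)
    (haθ : a ≤ θ) (hθ : θ ≤ 1) :
    (1 + t ^ 2) ^ (-(p * (1 - a)) / 2) * t ^ ((1 - θ) * (p - 1)) ≤
      2 ^ ((1 - θ) * (p - 1)) * τ ^ (θ - 1) := by
  have hτ0 : 0 < τ := by linarith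
  have hγ : 0 ≤ (1 - θ) * (p - 1) := mul_nonneg (by linarith) (by linarith)
  calc (1 + t ^ 2) ^ (-(p * (1 - a)) / 2) * t ^ ((1 - θ) * (p - 1))
      ≤ τ ^ (-(p * (1 - a))) * (2 * τ) ^ ((1 - θ) * (p - 1)) :=
        mul_le_mul (one_add_sq_rpow_neg_half_le (by nlinarith) hτ0 ht.1)
          (rpow_le_rpow (by linarith [ht.1]) ht.2 hγ) (rpow_nonneg (by linarith [ht.1]) _)
          (by positivity)
    _ = 2 ^ ((1 - θ) * (p - 1)) * τ ^ (-(p * (1 - a)) + (1 - θ) * (p - 1)) := by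
        rw [mul_rpow zero_le_two hτ0.le, rpow_add hτ0]; ring
    _ ≤ 2 ^ ((1 - θ) * (p - 1)) * τ ^ (θ - 1) := by
        gcongr
        nlinarith

lemma one_add_sq_rpow_neg_mul_duhamelGrowth_le_of_lt_one (hτ : 1 ≤ τ) (ht : t ∈ Icc τ (2 * τ))
    (hp : 1 ≤ p) (haθ : a ≤ θ) (hθ : θ < 1) :
    (1 + t ^ 2) ^ (-(p * (1 - a)) / 2) * duhamelGrowth θ t ^ (p - 1) ≤
      2 ^ ((1 - θ) * (p - 1)) * τ ^ (θ - 1) := by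
  rw [duhamelGrowth, if_pos hθ, ← rpow_mul (by linarith [ht.1])]
  exact one_add_sq_rpow_neg_mul_rpow_le hτ ht hp haθ hθ.le

lemma one_add_sq_rpow_neg_mul_duhamelGrowth_le_of_eq_one (hτ : 1 ≤ τ) (ht : t ∈ Icc τ (2 * τ))
    (hp : 1 ≤ p) (ha : a < 1) (hθ : θ = 1) :
    (1 + t ^ 2) ^ (-(p * (1 - a)) / 2) * duhamelGrowth θ t ^ (p - 1) ≤
      2 ^ ((1 - a) * (p - 1)) / (1 - a) ^ (p - 1) * τ ^ (a - 1) := by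
  have ht0 : 0 ≤ t := by linarith [ht.1]
  have hlog : log t ^ (p - 1) ≤ t ^ ((1 - a) * (p - 1)) / (1 - a) ^ (p - 1) := by
    rw [rpow_mul ht0, ← div_rpow (rpow_nonneg ht0 _) (by linarith)]
    exact rpow_le_rpow (log_nonneg (by linarith [ht.1])) (log_le_rpow_div ht0 (by linarith))
      (by linarith)
  rw [duhamelGrowth, if_neg hθ.not_lt, if_pos hθ]
  calc (1 + t ^ 2) ^ (-(p * (1 - a)) / 2) * log t ^ (p - 1)
      ≤ (1 + t ^ 2) ^ (-(p * (1 - a)) / 2) * t ^ ((1 - a) * (p - 1)) / (1 - a) ^ (p - 1) := by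
        rw [mul_div_assoc]; gcongr
    _ ≤ 2 ^ ((1 - a) * (p - 1)) * τ ^ (a - 1) / (1 - a) ^ (p - 1) := by
        have := one_add_sq_rpow_neg_mul_rpow_le hτ ht hp le_rfl ha.le
        gcongr
    _ = 2 ^ ((1 - a) * (p - 1)) / (1 - a) ^ (p - 1) * τ ^ (a - 1) := by ring

lemma one_add_sq_rpow_neg_mul_duhamelGrowth_le_one (ha : a ≤ 1) (hp : 0 ≤ p) (hθ : 1 < θ) :
    (1 + t ^ 2) ^ (-(p * (1 - a)) / 2) * duhamelGrowth θ t ^ (p - 1) ≤ 1 := by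
  rw [duhamelGrowth, if_neg (by linarith), if_neg hθ.ne', one_rpow, mul_one]
  exact rpow_le_one_of_one_le_of_nonpos (by nlinarith) (by nlinarith)

end Weight

theorem stmt5_general (a δ p : ℝ) (ha1 : a ≤ 1) (hδ : 0 < δ) (hp : 1 < p) :
    ∃ C : ℝ, 0 < C ∧
      ∀ τ : ℝ, 1 ≤ τ →
        ∫⁻ t in Set.Icc (τ + 1) (2 * τ),
            ENNReal.ofReal ((1 + t ^ 2) ^ (-(p * (1 - a)) / 2) *
              (if a + δ < 1 then t ^ (1 - (a + δ))
                else if a + δ = 1 then Real.log t else 1) ^ (p - 1) *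
              (t - τ) ^ (-(a + δ)))
          ≤ ENNReal.ofReal C := by
  have hIcc {τ t : ℝ} (ht : t ∈ Icc (τ + 1) (2 * τ)) : t ∈ Icc τ (2 * τ) :=
    ⟨by linarith [ht.1], ht.2⟩
  rcases lt_trichotomy (a + δ) 1 with hθ | hθ | hθ
  · refine ⟨2 ^ ((1 - (a + δ)) * (p - 1)) / (1 - (a + δ)), by bound, fun τ hτ => ?_⟩
    exact setLIntegral_Icc_mul_sub_rpow_le_of_lt_one hτ hθ le_rfl (by positivity) fun t ht =>
      one_add_sq_rpow_neg_mul_duhamelGrowth_le_of_lt_one hτ (hIcc ht) hp.le (by linarith) hθ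
  · have ha : a < 1 := by linarith
    refine ⟨2 ^ ((1 - a) * (p - 1)) / (1 - a) ^ (p - 1) / (1 - a), by bound, fun τ hτ => ?_⟩
    exact setLIntegral_Icc_mul_sub_rpow_le_of_lt_one hτ ha (by linarith) (by bound)
      fun t ht => one_add_sq_rpow_neg_mul_duhamelGrowth_le_of_eq_one hτ (hIcc ht) hp.le ha hθ
  · refine ⟨1 / (a + δ - 1), by bound, fun τ hτ => ?_⟩
    exact setLIntegral_Icc_mul_sub_rpow_le_of_one_lt hτ hθ zero_le_one fun t _ =>
      one_add_sq_rpow_neg_mul_duhamelGrowth_le_one ha1 (by linarith) hθ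

/-- The uniform bound on `K(τ)` from Step 2 of the proof of Proposition 4.1: for
`a ∈ (0,1]`, `δ > 0`, `p ∈ (1,∞)`, with `J(t) = t^{1-(a+δ)}` if `a+δ < 1`, `J(t) = log t`
if `a+δ = 1`, `J(t) = 1` if `a+δ > 1`, there is `C > 0` such that for all `τ ≥ 1`,
`∫_{τ+1}^{2τ} ⟨t⟩^{-p(1-a)} J(t)^{p-1} (t-τ)^{-(a+δ)} dt ≤ C`. -/
theorem stmt5 (a δ p : ℝ) (ha0 : 0 < a) (ha1 : a ≤ 1) (hδ : 0 < δ) (hp : 1 < p) :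
    ∃ C : ℝ, 0 < C ∧
      ∀ τ : ℝ, 1 ≤ τ →
        ∫⁻ t in Set.Icc (τ + 1) (2 * τ),
            ENNReal.ofReal ((1 + t ^ 2) ^ (-(p * (1 - a)) / 2) *
              (if a + δ < 1 then t ^ (1 - (a + δ))
                else if a + δ = 1 then Real.log t else 1) ^ (p - 1) *
              (t - τ) ^ (-(a + δ)))
          ≤ ENNReal.ofReal C :=
  stmt5_general a δ p ha1 hδ hp
end

section
/- Let a ∈ (0,1], δ > 0, and p ∈ (1,∞) with pδ > 1, and set ⟨t⟩ = √(1+t²). There exists a constant C > 0 such that for every measurable function g : (0,∞) → [0,∞], (∫_2^∞ ( ⟨t⟩^a ∫_0^{t/2} (t−τ)^{−(a+δ)} g(τ) dτ )^p dt)^{1/p} ≤ C (∫_0^∞ (⟨τ⟩ g(τ))^p dτ)^{1/p}. -/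
open MeasureTheory
open scoped ENNReal

/-!
For `τ ≤ t / 2` the kernel is at most `2 ^ (a + δ) t ^ (-(a + δ))` and `⟨t⟩ ^ a ≤ 2 ^ a t ^ a`,
so the inner integral is at most a constant times `t ^ (-δ) ∫₀^∞ g`. Hölder's inequality with
the weight `⟨τ⟩` bounds `∫₀^∞ g` by the weighted `L^p` norm of `g` times the `L^q` norm of
`⟨τ⟩⁻¹`, finite as `q > 1`; and `t ^ (-δ)` lies in `L^p(2, ∞)` because `p δ > 1`.
-/

lemma sqrt_one_add_sq_le_two_mul {t : ℝ} (ht : 1 ≤ t) : Real.sqrt (1 + t ^ 2) ≤ 2 * t := by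
  rw [Real.sqrt_le_left (by linarith)]
  nlinarith

lemma sqrt_one_add_sq_rpow_mul_rpow_sub_le {a δ t τ : ℝ} (ha : 0 ≤ a) (haδ : 0 ≤ a + δ)
    (ht : 1 ≤ t) (hτ : τ ≤ t / 2) :
    Real.sqrt (1 + t ^ 2) ^ a * (t - τ) ^ (-(a + δ)) ≤ 2 ^ a * 2 ^ (a + δ) * t ^ (-δ) := by
  have ht0 : 0 < t := by linarith
  have hweight : Real.sqrt (1 + t ^ 2) ^ a ≤ 2 ^ a * t ^ a := by
    rw [← Real.mul_rpow zero_le_two ht0.le]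
    exact Real.rpow_le_rpow (Real.sqrt_nonneg _) (sqrt_one_add_sq_le_two_mul ht) ha
  have hkernel : (t - τ) ^ (-(a + δ)) ≤ 2 ^ (a + δ) * t ^ (-(a + δ)) := by
    calc (t - τ) ^ (-(a + δ)) ≤ (t / 2) ^ (-(a + δ)) :=
          Real.rpow_le_rpow_of_nonpos (by positivity) (by linarith) (neg_nonpos.2 haδ)
      _ = 2 ^ (a + δ) * t ^ (-(a + δ)) := by
          rw [Real.div_rpow ht0.le zero_le_two, Real.rpow_neg zero_le_two, div_inv_eq_mul,
            mul_comm]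
  calc Real.sqrt (1 + t ^ 2) ^ a * (t - τ) ^ (-(a + δ))
      ≤ (2 ^ a * t ^ a) * (2 ^ (a + δ) * t ^ (-(a + δ))) :=
        mul_le_mul hweight hkernel (Real.rpow_nonneg (by linarith) _) (by positivity)
    _ = 2 ^ a * 2 ^ (a + δ) * t ^ (a + -(a + δ)) := by rw [Real.rpow_add ht0]; ring
    _ = 2 ^ a * 2 ^ (a + δ) * t ^ (-δ) := by ring_nf

lemma ENNReal.lintegral_le_weighted_Lp_mul_Lq {α : Type*} [MeasurableSpace α]
    (μ : Measure α) {p q : ℝ} (hpq : p.HolderConjugate q) {f w : α → ℝ≥0∞}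
    (hf : AEMeasurable f μ) (hw : Measurable w) (hw0 : ∀ x, w x ≠ 0) (hwtop : ∀ x, w x ≠ ∞) :
    ∫⁻ x, f x ∂μ ≤ (∫⁻ x, (w x * f x) ^ p ∂μ) ^ (1 / p) * (∫⁻ x, (w x)⁻¹ ^ q ∂μ) ^ (1 / q) := by
  have hfw : ∀ x, f x = (w x * f x) * (w x)⁻¹ := fun x => by
    rw [mul_comm (w x), mul_assoc, ENNReal.mul_inv_cancel (hw0 x) (hwtop x), mul_one]
  calc ∫⁻ x, f x ∂μ = ∫⁻ x, (w x * f x) * (w x)⁻¹ ∂μ := lintegral_congr hfw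
    _ ≤ _ := ENNReal.lintegral_mul_le_Lp_mul_Lq μ hpq (hw.aemeasurable.mul hf) hw.inv.aemeasurable

lemma lintegral_inv_sqrt_one_add_sq_rpow_ne_top {q : ℝ} (hq : 1 < q) :
    ∫⁻ τ, (ENNReal.ofReal (Real.sqrt (1 + τ ^ 2)))⁻¹ ^ q ≠ ∞ := by
  have hint : Integrable fun τ : ℝ => (1 + ‖τ‖ ^ 2) ^ (-q / 2) :=
    integrable_rpow_neg_one_add_norm_sq (by simpa using hq)
  refine ne_of_eq_of_ne (lintegral_congr fun τ => ?_) hint.lintegral_lt_top.ne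
  have hpos : 0 < Real.sqrt (1 + τ ^ 2) := Real.sqrt_pos.2 (by positivity)
  rw [← ENNReal.ofReal_inv_of_pos hpos, ENNReal.ofReal_rpow_of_nonneg (by positivity)
    (by linarith), Real.norm_eq_abs, sq_abs, Real.sqrt_eq_rpow, Real.inv_rpow (by positivity),
    ← Real.rpow_mul (by positivity), ← Real.rpow_neg (by positivity)]
  ring_nf

lemma lintegral_rpow_mul_const_rpow_one_div {α : Type*} [MeasurableSpace α] (μ : Measure α)
    {p : ℝ} (hp : 0 < p) {f : α → ℝ≥0∞} (hf : Measurable f) (c : ℝ≥0∞) :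
    (∫⁻ x, (f x * c) ^ p ∂μ) ^ (1 / p) = (∫⁻ x, f x ^ p ∂μ) ^ (1 / p) * c := by
  simp_rw [ENNReal.mul_rpow_of_nonneg _ _ hp.le]
  rw [lintegral_mul_const _ (hf.pow_const p), ENNReal.mul_rpow_of_nonneg _ _ (by positivity),
    ← ENNReal.rpow_mul, mul_one_div_cancel hp.ne', ENNReal.rpow_one]

lemma ENNReal.exists_pos_le_ofReal {D : ℝ≥0∞} (hD : D ≠ ∞) :
    ∃ C : ℝ, 0 < C ∧ D ≤ ENNReal.ofReal C :=
  ⟨D.toReal + 1, by positivity, by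
    rw [← ENNReal.ofReal_toReal hD]; exact ENNReal.ofReal_le_ofReal (by simp)⟩

lemma lintegral_Ioi_ofReal_rpow_neg_rpow_ne_top {δ p c : ℝ} (hp : 0 < p) (hpδ : 1 < p * δ)
    (hc : 0 < c) : ∫⁻ t in Set.Ioi c, ENNReal.ofReal (t ^ (-δ)) ^ p ≠ ∞ := by
  have hint : IntegrableOn (fun t : ℝ => t ^ (-(δ * p))) (Set.Ioi c) :=
    integrableOn_Ioi_rpow_of_lt (by linarith) hc
  refine ne_of_eq_of_ne (setLIntegral_congr_fun measurableSet_Ioi fun t ht => ?_)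
    hint.lintegral_lt_top.ne
  have ht0 : 0 < t := hc.trans ht
  rw [ENNReal.ofReal_rpow_of_nonneg (by positivity) hp.le, ← Real.rpow_mul ht0.le, neg_mul]

lemma ofReal_sqrt_one_add_sq_rpow_mul_lintegral_le {a δ t : ℝ} (ha : 0 ≤ a) (haδ : 0 ≤ a + δ)
    (ht : 1 ≤ t) (g : ℝ → ℝ≥0∞) :
    ENNReal.ofReal (Real.sqrt (1 + t ^ 2) ^ a) *
        ∫⁻ τ in Set.Ioc 0 (t / 2), ENNReal.ofReal ((t - τ) ^ (-(a + δ))) * g τ ≤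
      ENNReal.ofReal (t ^ (-δ)) *
        (ENNReal.ofReal (2 ^ a * 2 ^ (a + δ)) * ∫⁻ τ in Set.Ioi 0, g τ) := by
  rw [← mul_assoc, ← ENNReal.ofReal_mul (by positivity), ← lintegral_const_mul' _ _ (by simp),
    ← lintegral_const_mul' _ _ (by simp)]
  calc ∫⁻ τ in Set.Ioc 0 (t / 2),
        ENNReal.ofReal (Real.sqrt (1 + t ^ 2) ^ a) * (ENNReal.ofReal ((t - τ) ^ (-(a + δ))) * g τ)
      ≤ ∫⁻ τ in Set.Ioc 0 (t / 2), ENNReal.ofReal (t ^ (-δ) * (2 ^ a * 2 ^ (a + δ))) * g τ := by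
        refine setLIntegral_mono' measurableSet_Ioc fun τ hτ => ?_
        rw [← mul_assoc, ← ENNReal.ofReal_mul (by positivity), mul_comm (t ^ (-δ))]
        gcongr ?_ * _
        exact ENNReal.ofReal_le_ofReal (sqrt_one_add_sq_rpow_mul_rpow_sub_le ha haδ ht hτ.2)
    _ ≤ _ := lintegral_mono_set Set.Ioc_subset_Ioi_self

theorem stmt6_general (a δ p : ℝ) (ha0 : 0 < a) (hδ : 0 < δ) (hp : 1 < p)
    (hpδ : 1 < p * δ) :
    ∃ C : ℝ, 0 < C ∧
      ∀ g : ℝ → ℝ≥0∞, Measurable g →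
        (∫⁻ t in Set.Ioi (2 : ℝ),
            (ENNReal.ofReal (Real.sqrt (1 + t ^ 2) ^ a) *
              ∫⁻ τ in Set.Ioc (0 : ℝ) (t / 2),
                ENNReal.ofReal ((t - τ) ^ (-(a + δ))) * g τ) ^ p) ^ (1 / p)
          ≤ ENNReal.ofReal C *
            (∫⁻ τ in Set.Ioi (0 : ℝ),
              (ENNReal.ofReal (Real.sqrt (1 + τ ^ 2)) * g τ) ^ p) ^ (1 / p) := by
  have hp0 : 0 < p := by linarith
  have hpq := Real.HolderConjugate.conjExponent hp
  set q := p.conjExponent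
  set c := ENNReal.ofReal (2 ^ a * 2 ^ (a + δ))
  set K := (∫⁻ t in Set.Ioi (2 : ℝ), ENNReal.ofReal (t ^ (-δ)) ^ p) ^ (1 / p)
  set L := (∫⁻ τ in Set.Ioi (0 : ℝ), (ENNReal.ofReal (Real.sqrt (1 + τ ^ 2)))⁻¹ ^ q) ^ (1 / q)
  have hK : K ≠ ∞ := ENNReal.rpow_ne_top_of_nonneg (by positivity)
    (lintegral_Ioi_ofReal_rpow_neg_rpow_ne_top hp0 hpδ two_pos)
  have hL : L ≠ ∞ := ENNReal.rpow_ne_top_of_nonneg (by simp [hpq.symm.nonneg]) <|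
    ne_top_of_le_ne_top (lintegral_inv_sqrt_one_add_sq_rpow_ne_top hpq.symm.lt)
      (setLIntegral_le_lintegral _ _)
  obtain ⟨C, hC, hKcL⟩ := ENNReal.exists_pos_le_ofReal (by finiteness : K * c * L ≠ ∞)
  refine ⟨C, hC, fun g hg => ?_⟩
  calc _ ≤ (∫⁻ t in Set.Ioi (2 : ℝ),
          (ENNReal.ofReal (t ^ (-δ)) * (c * ∫⁻ τ in Set.Ioi 0, g τ)) ^ p) ^ (1 / p) := by
        refine ENNReal.rpow_le_rpow (setLIntegral_mono' measurableSet_Ioi fun t ht =>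
          ENNReal.rpow_le_rpow ?_ hp0.le) (by positivity)
        exact ofReal_sqrt_one_add_sq_rpow_mul_lintegral_le ha0.le (by linarith)
          (by linarith [ht.out]) g
    _ = K * (c * ∫⁻ τ in Set.Ioi 0, g τ) :=
        lintegral_rpow_mul_const_rpow_one_div _ hp0 (by fun_prop) _
    _ ≤ K * (c * ((∫⁻ τ in Set.Ioi (0 : ℝ),
          (ENNReal.ofReal (Real.sqrt (1 + τ ^ 2)) * g τ) ^ p) ^ (1 / p) * L)) := by
        gcongr
        exact ENNReal.lintegral_le_weighted_Lp_mul_Lq _ hpq hg.aemeasurable (by fun_prop)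
          (fun τ => (ENNReal.ofReal_pos.2 (by positivity)).ne') (by simp)
    _ = K * c * L * (∫⁻ τ in Set.Ioi (0 : ℝ),
          (ENNReal.ofReal (Real.sqrt (1 + τ ^ 2)) * g τ) ^ p) ^ (1 / p) := by ring
    _ ≤ _ := by gcongr

/-- Step 1 of the proof of Proposition 4.1, scalar form: for `a ∈ (0,1]`, `δ > 0`,
`p ∈ (1,∞)` with `pδ > 1`, there is `C > 0` such that for every measurable
`g : (0,∞) → [0,∞]`,
`(∫_2^∞ (⟨t⟩^a ∫_0^{t/2} (t-τ)^{-(a+δ)} g(τ) dτ)^p dt)^{1/p} ≤ C (∫_0^∞ (⟨τ⟩ g(τ))^p dτ)^{1/p}`,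
where `⟨t⟩ = √(1+t²)`. -/
theorem stmt6 (a δ p : ℝ) (ha0 : 0 < a) (ha1 : a ≤ 1) (hδ : 0 < δ) (hp : 1 < p)
    (hpδ : 1 < p * δ) :
    ∃ C : ℝ, 0 < C ∧
      ∀ g : ℝ → ℝ≥0∞, Measurable g →
        (∫⁻ t in Set.Ioi (2 : ℝ),
            (ENNReal.ofReal (Real.sqrt (1 + t ^ 2) ^ a) *
              ∫⁻ τ in Set.Ioc (0 : ℝ) (t / 2),
                ENNReal.ofReal ((t - τ) ^ (-(a + δ))) * g τ) ^ p) ^ (1 / p)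
          ≤ ENNReal.ofReal C *
            (∫⁻ τ in Set.Ioi (0 : ℝ),
              (ENNReal.ofReal (Real.sqrt (1 + τ ^ 2)) * g τ) ^ p) ^ (1 / p) :=
  stmt6_general a δ p ha0 hδ hp hpδ
end
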